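/- arXiv:1005.2946 — 3 statements merged into one kernel-verified Lean document; each statement's English description precedes it below -/
import Mathlib

section
/- Let n ≥ 2 and suppose f(x) = x^j ∑_{k≥0} a_k x^k with a_0 ≠ 0 is a formal power series satisfying U_n f = λ f for some λ ∈ ℂ. If n divides j, then j = 0 and λ = 1. -/
/-!
If `U n f = λ f` and `f` has order `d = n q`, comparing the coefficients of `x^(n q)` gives
`f_d = λ f_q`. For `q > 0` we have `q < n q = d` as `n ≥ 2`, so `f_q = 0` while `f_d ≠ 0`;
hence `d = 0`, and comparing constant terms gives `λ = 1`.
-/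

/-- The Hecke operator `U n` on formal power series. -/
noncomputable def heckeU (n : ℕ) (f : PowerSeries ℂ) : PowerSeries ℂ :=
  PowerSeries.mk fun k => PowerSeries.coeff (n * k) f

open PowerSeries

section

variable {n : ℕ} {lam : ℂ} {f : PowerSeries ℂ}

@[simp]
theorem coeff_heckeU (n k : ℕ) (f : PowerSeries ℂ) :
    coeff k (heckeU n f) = coeff (n * k) f :=
  coeff_mk _ _

theorem coeff_mul_eq_of_heckeU_eq_smul (heig : heckeU n f = lam • f) (k : ℕ) :
    coeff (n * k) f = lam * coeff k f := by
  simpa using congrArg (coeff k) heig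

theorem eq_zero_of_heckeU_eq_smul_of_order_eq_mul (hn : 2 ≤ n) (heig : heckeU n f = lam • f)
    {q : ℕ} (hord : f.order = (n * q : ℕ)) : q = 0 := by
  obtain ⟨hlead, hbelow⟩ := order_eq_nat.mp hord
  by_contra hq
  have hlt : q < n * q := lt_mul_left (Nat.pos_of_ne_zero hq) (by omega)
  exact hlead (by rw [coeff_mul_eq_of_heckeU_eq_smul heig, hbelow q hlt, mul_zero])

theorem eq_one_of_heckeU_eq_smul_of_order_eq_zero (heig : heckeU n f = lam • f)
    (hord : f.order = 0) : lam = 1 := by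
  have hconst : coeff 0 f ≠ 0 := (order_eq_nat (n := 0)).mp hord |>.1
  have h := coeff_mul_eq_of_heckeU_eq_smul heig 0
  rw [mul_zero] at h
  exact (mul_eq_right₀ hconst).mp h.symm

end

theorem order_X_pow_mul_mk {R : Type*} [Semiring R] [NoZeroDivisors R] {a : ℕ → R}
    (ha : a 0 ≠ 0) (j : ℕ) : ((X : PowerSeries R) ^ j * mk a).order = j := by
  have : Nontrivial R := ⟨⟨a 0, 0, ha⟩⟩
  have hunit : (mk a).order = 0 := order_eq_nat.mpr ⟨by simpa using ha, by simp⟩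
  rw [order_mul, order_X_pow, hunit, add_zero]

theorem stmt_8 (n : ℕ) (hn : 2 ≤ n) (j : ℕ) (a : ℕ → ℂ) (ha : a 0 ≠ 0) (lam : ℂ)
    (f : PowerSeries ℂ)
    (hf : f = (PowerSeries.X : PowerSeries ℂ) ^ j * PowerSeries.mk a)
    (heig : heckeU n f = lam • f) (hdvd : n ∣ j) :
    j = 0 ∧ lam = 1 := by
  obtain ⟨q, rfl⟩ := hdvd
  have hord : f.order = (n * q : ℕ) := hf ▸ order_X_pow_mul_mk ha _
  have hq : q = 0 := eq_zero_of_heckeU_eq_smul_of_order_eq_mul hn heig hord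
  subst hq
  exact ⟨mul_zero n, eq_one_of_heckeU_eq_smul_of_order_eq_zero heig (by simpa using hord)⟩
end

section
/- Let a ∈ ℂ, and let j, n be positive integers with n not dividing j. Set r := n(1 - {j/n}) - 1 where {j/n} denotes the fractional part of j/n, and N := n(k+1-{j/n}) for a natural number k. Then (a)_N = n^{nk} (a)_{r+1} ∏_{i=r+1}^{r+n} ((a+i)/n)_k. -/
/-!
Split off the first `r + 1` factors: `N = (r + 1) + n k`, and `(a)_N = (a)_{r+1} (a + r + 1)_{nk}`.
The remaining block is Gauss's multiplication formula
`(x)_{nk} = n^{nk} ∏_{i<n} ((x + i)/n)_k`, which holds because the factors `x + m`, `m < nk`,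
regroup by the residue `i` of `m` mod `n` into `n ((x + i)/n + t)`, `t < k`.
-/

open Finset Polynomial

theorem ascPochhammer_eval_add {S : Type*} [CommSemiring S] (p q : ℕ) (x : S) :
    (ascPochhammer S (p + q)).eval x =
      (ascPochhammer S p).eval x * (ascPochhammer S q).eval (x + p) := by
  rw [← ascPochhammer_mul, eval_mul, eval_comp, eval_add, eval_X, eval_natCast]

theorem ascPochhammer_eval_eq_prod_range {S : Type*} [CommSemiring S] (m : ℕ) (x : S) :
    (ascPochhammer S m).eval x = ∏ i ∈ range m, (x + i) := by
  induction m with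
  | zero => simp
  | succ m ih => rw [ascPochhammer_succ_eval, ih, prod_range_succ]

theorem ascPochhammer_eval_mul_eq_pow_mul_prod {K : Type*} [Field K] {n : ℕ}
    (hn : (n : K) ≠ 0) (k : ℕ) (x : K) :
    (ascPochhammer K (n * k)).eval x =
      (n : K) ^ (n * k) * ∏ i ∈ range n, (ascPochhammer K k).eval ((x + i) / n) := by
  induction k with
  | zero => simp
  | succ k ih =>
    have last_block : (ascPochhammer K n).eval (x + ↑(n * k)) =
        (n : K) ^ n * ∏ i ∈ range n, ((x + i) / n + k) := by
      rw [ascPochhammer_eval_eq_prod_range, pow_eq_prod_const, ← prod_mul_distrib]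
      refine prod_congr rfl fun i _ => ?_
      field_simp
      push_cast
      ring
    simp only [ascPochhammer_succ_eval, prod_mul_distrib]
    rw [Nat.mul_succ, ascPochhammer_eval_add, ih, last_block, pow_add]
    ring

theorem stmt_13_general (a : ℂ) (j n : ℕ) (hn : 0 < n)
    (k : ℕ) (r N : ℕ)
    (hr : r = n - j % n - 1)        -- r = n(1 - {j/n}) - 1
    (hN : N = n * (k + 1) - j % n)  -- N = n(k + 1 - {j/n})
    :
    (ascPochhammer ℂ N).eval a =
      (n : ℂ) ^ (n * k) * (ascPochhammer ℂ (r + 1)).eval a *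
        ∏ i ∈ Finset.Icc (r + 1) (r + n),
          (ascPochhammer ℂ k).eval ((a + i) / n) := by
  have hN' : N = (r + 1) + n * k := by
    have := Nat.mod_lt j hn
    rw [hN, hr, Nat.mul_succ]
    omega
  have reindex : ∏ i ∈ Icc (r + 1) (r + n), (ascPochhammer ℂ k).eval ((a + i) / n) =
      ∏ i ∈ range n, (ascPochhammer ℂ k).eval ((a + ↑(r + 1) + i) / n) := by
    rw [← Ico_add_one_right_eq_Icc, prod_Ico_eq_prod_range, show r + n + 1 - (r + 1) = n by omega]
    refine prod_congr rfl fun i _ => ?_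
    push_cast
    ring_nf
  rw [hN', ascPochhammer_eval_add,
    ascPochhammer_eval_mul_eq_pow_mul_prod (Nat.cast_ne_zero.mpr hn.ne'), reindex]
  ring

theorem stmt_13 (a : ℂ) (j n : ℕ) (hj : 0 < j) (hn : 0 < n) (hdvd : ¬ n ∣ j)
    (k : ℕ) (r N : ℕ)
    (hr : r = n - j % n - 1)        -- r = n(1 - {j/n}) - 1
    (hN : N = n * (k + 1) - j % n)  -- N = n(k + 1 - {j/n})
    :
    (ascPochhammer ℂ N).eval a =
      (n : ℂ) ^ (n * k) * (ascPochhammer ℂ (r + 1)).eval a *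
        ∏ i ∈ Finset.Icc (r + 1) (r + n),
          (ascPochhammer ℂ k).eval ((a + i) / n) :=
  stmt_13_general a j n hn k r N hr hN
end

section
/- Let a = (a_1,...,a_p) and b = (b_1,...,b_p) be tuples of real numbers such that e^{a_1 t} + ··· + e^{a_p t} = e^{b_1 t} + ··· + e^{b_p t} for all real t. Then the multisets {a_1,...,a_p} and {b_1,...,b_p} are equal. -/
/-!
For distinct `x`, the functions `t ↦ exp (x t)` are distinct characters of `(ℝ, +)`, hence
linearly independent (Dedekind–Artin). Comparing coefficients in the identity shows that every
value occurs equally often among the `a i` and among the `b i`, and a bijection between the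
corresponding fibres is the required permutation.
-/

open Finset

theorem linearIndependent_exp_mul :
    LinearIndependent ℝ fun x : ℝ => fun t : ℝ => Real.exp (x * t) := by
  let character : ℝ → (Multiplicative ℝ →* ℝ) := fun x =>
    { toFun := fun t => Real.exp (x * t.toAdd)
      map_one' := by simp
      map_mul' := fun s t => by simp [mul_add, Real.exp_add] }
  have character_injective : Function.Injective character := fun x y hxy => by
    have := DFunLike.congr_fun hxy (Multiplicative.ofAdd 1)
    simp only [character, MonoidHom.coe_mk, OneHom.coe_mk, toAdd_ofAdd, mul_one] at this
    exact Real.exp_injective this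
  exact (linearIndependent_monoidHom (Multiplicative ℝ) ℝ).comp character character_injective

theorem LinearIndependent.multiset_eq_of_sum_map_eq {ι R M : Type*} [Semiring R] [CharZero R]
    [AddCommMonoid M] [Module R M] {v : ι → M} (hv : LinearIndependent R v) {s t : Multiset ι}
    (h : (s.map v).sum = (t.map v).sum) : s = t := by
  classical
  have sum_map_eq : ∀ u : Multiset ι,
      (u.map v).sum = Finsupp.linearCombination ℕ v (Multiset.toFinsupp u) := by
    intro u
    induction u using Multiset.induction_on with
    | empty => simp
    | cons i u ih =>
      rw [← Multiset.singleton_add, Multiset.map_add, Multiset.sum_add, ih, map_add, map_add]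
      simp
  rw [sum_map_eq, sum_map_eq] at h
  have nat_smul_one_injective : Function.Injective fun n : ℕ => n • (1 : R) :=
    fun m n hmn => Nat.cast_injective (R := R) (by simpa using hmn)
  exact Multiset.toFinsupp.injective (hv.restrict_scalars nat_smul_one_injective h)

theorem Fintype.exists_perm_of_map_univ_eq {α β : Type*} [Fintype α] {a b : α → β}
    (h : univ.val.map a = univ.val.map b) : ∃ σ : Equiv.Perm α, ∀ i, a i = b (σ i) := by
  classical
  have fiber_card_eq : ∀ y, Fintype.card {i // a i = y} = Fintype.card {i // b i = y} := by
    intro y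
    simpa [Multiset.count_map, Fintype.card_subtype, Finset.card, Finset.filter_val, eq_comm]
      using congrArg (Multiset.count y) h
  exact ⟨Equiv.ofFiberEquiv fun y => Fintype.equivOfCardEq (fiber_card_eq y),
    fun i => (Equiv.ofFiberEquiv_map _ i).symm⟩

theorem stmt_16 (p : ℕ) (a b : Fin p → ℝ)
    (h : ∀ t : ℝ, ∑ i, Real.exp (a i * t) = ∑ i, Real.exp (b i * t)) :
    ∃ σ : Equiv.Perm (Fin p), ∀ i, a i = b (σ i) := by
  refine Fintype.exists_perm_of_map_univ_eq
    (linearIndependent_exp_mul.multiset_eq_of_sum_map_eq ?_)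
  rw [Multiset.map_map, Multiset.map_map]
  show ∑ i, (fun t => Real.exp (a i * t)) = ∑ i, fun t => Real.exp (b i * t)
  exact funext fun t => by simpa only [Finset.sum_apply] using h t
end
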